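/- The constrained quasicontinuum energy decomposes into bulk, surface, and interfacial parts: for every z with all r_j > 0, E^CQC(z) = Σ_{j=−N}^{N} L_j W(D_j) + S_b(D_{−N}) + Σ_{j=−N+1}^{N} S(D_{j−1}, D_j) + S_b(D_N), where L_j := ν_j a₀, D_j := r_j / a₀, W(D) := (φ(D a₀) + φ(2 D a₀))/a₀, S_b(D) := −½ φ(2 D a₀), and S(D₁, D₂) := −½ φ(2 D₁ a₀) + φ(D₁ a₀ + D₂ a₀) − ½ φ(2 D₂ a₀). -/

import Mathlib

/-!
Every nearest-neighbour bond lies in a single element `j` and has length `r_j`, so the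
first sum is `∑ ν_j φ(r_j)`. A second-neighbour bond either lies inside element `j`
(there are `ν_j - 1` of these, of length `2 r_j`) or straddles the representative atom
`ℓ_j` (length `r_{j-1} + r_j`). Splitting the defect `-φ(2 r_j)` into two halves at the
two ends of element `j` yields the surface terms at the ends of the chain and the
interfacial terms at the interior representative atoms.
-/

open Finset

/-- Strain-energy density `W(D) := (φ(D a₀) + φ(2 D a₀))/a₀`. -/
noncomputable def Wdens (φ : ℝ → ℝ) (a₀ D : ℝ) : ℝ := (φ (D * a₀) + φ (2 * D * a₀)) / a₀

/-- Surface energy `S_b(D) := −½ φ(2 D a₀)`. -/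
noncomputable def Sb (φ : ℝ → ℝ) (a₀ D : ℝ) : ℝ := -(φ (2 * D * a₀)) / 2

/-- Interfacial energy `S(D₁, D₂) := −½ φ(2D₁a₀) + φ(D₁a₀ + D₂a₀) − ½ φ(2D₂a₀)`. -/
noncomputable def Sint (φ : ℝ → ℝ) (a₀ D₁ D₂ : ℝ) : ℝ :=
  -(φ (2 * D₁ * a₀)) / 2 + φ (D₁ * a₀ + D₂ * a₀) - φ (2 * D₂ * a₀) / 2

/-- Deformation gradient of the `j`th element: `D_j := r_j / a₀` where
`r_j = (z_{j+1} − z_j)/ν_j` and `ν_j = ℓ_{j+1} − ℓ_j`. -/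
noncomputable def Dgrad (a₀ : ℝ) (ℓ : ℤ → ℤ) (z : ℤ → ℝ) (j : ℤ) : ℝ :=
  (z (j + 1) - z j) / (((ℓ (j + 1) - ℓ j : ℤ) : ℝ) * a₀)

theorem Finset.sum_Ico_eq_sum_sum_Ico_of_monotoneOn {M : Type*} [AddCommMonoid M]
    (ℓ : ℤ → ℤ) (F : ℤ → M) {a b : ℤ} (hab : a ≤ b) (hℓ : MonotoneOn ℓ (Set.Icc a b)) :
    ∑ i ∈ Ico (ℓ a) (ℓ b), F i = ∑ j ∈ Ico a b, ∑ i ∈ Ico (ℓ j) (ℓ (j + 1)), F i := by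
  induction b, hab using Int.leInduction with
  | base => simp
  | succ b hab ih =>
    have hab' : ℓ a ≤ ℓ b := hℓ ⟨le_rfl, by omega⟩ ⟨hab, by omega⟩ hab
    have hb : ℓ b ≤ ℓ (b + 1) := hℓ ⟨hab, by omega⟩ ⟨by omega, le_rfl⟩ (by omega)
    rw [← Ico_union_Ico_eq_Ico hab' hb, sum_union (Ico_disjoint_Ico_consecutive _ _ _),
      ih (hℓ.mono (Set.Icc_subset_Icc_right (by omega))), ← insert_Ico_right_eq_Ico_add_one hab,
      sum_insert right_notMem_Ico, add_comm]

theorem Finset.sum_Icc_eq_half_add_sum_avg_add_half (u : ℤ → ℝ) {a b : ℤ} (hab : a ≤ b) :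
    ∑ j ∈ Icc a b, u j = u a / 2 + ∑ j ∈ Icc (a + 1) b, (u (j - 1) + u j) / 2 + u b / 2 := by
  have hleft : u a + ∑ j ∈ Ioc a b, u j = ∑ j ∈ Icc a b, u j := add_sum_Ioc_eq_sum_Icc hab
  have hright : ∑ j ∈ Ico a b, u j + u b = ∑ j ∈ Icc a b, u j := sum_Ico_add_eq_sum_Icc hab
  have hshift : ∑ j ∈ Ico a b, u j = ∑ j ∈ Ioc a b, u (j - 1) := by
    rw [← Ico_add_one_add_one_eq_Ioc, ← sum_Ico_add']
    simp
  rw [Icc_add_one_left_eq_Ioc, ← sum_div, sum_add_distrib, ← hshift]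
  linarith

section PiecewiseConstant

variable (d : ℤ → ℝ)

theorem sum_Ico_comp_of_const (f : ℝ → ℝ) {p q : ℤ} {c : ℝ} (hpq : p ≤ q)
    (hd : ∀ i ∈ Ico p q, d i = c) :
    ∑ i ∈ Ico p q, f (d i) = ((q - p : ℤ) : ℝ) * f c := by
  rw [sum_congr rfl fun i hi => congrArg f (hd i hi), sum_const, nsmul_eq_mul,
    ← Int.cast_natCast, Int.card_Ico_of_le _ _ hpq]

theorem sum_Ico_pair_of_const (g : ℝ → ℝ → ℝ) {p q : ℤ} {c : ℝ} (hpq : p < q)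
    (hd : ∀ i ∈ Ico p q, d i = c) :
    ∑ i ∈ Ico p (q - 1), g (d i) (d (i + 1)) = (((q - p : ℤ) : ℝ) - 1) * g c c := by
  have hconst : ∀ i ∈ Ico p (q - 1), g (d i) (d (i + 1)) = g c c := fun i hi => by
    have hi' := mem_Ico.1 hi
    rw [hd i (mem_Ico.2 ⟨hi'.1, by omega⟩), hd (i + 1) (mem_Ico.2 ⟨by omega, by omega⟩)]
  rw [sum_congr rfl hconst, sum_const, nsmul_eq_mul, ← Int.cast_natCast,
    Int.card_Ico_of_le _ _ (by omega)]
  push_cast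
  ring

variable (ℓ : ℤ → ℤ) (r : ℤ → ℝ) {a b : ℤ}

theorem sum_Ico_comp_eq_sum_mul_of_piecewise_const (f : ℝ → ℝ) (hab : a ≤ b)
    (hℓ : MonotoneOn ℓ (Set.Icc a b))
    (hd : ∀ j ∈ Ico a b, ∀ i ∈ Ico (ℓ j) (ℓ (j + 1)), d i = r j) :
    ∑ i ∈ Ico (ℓ a) (ℓ b), f (d i) =
      ∑ j ∈ Ico a b, ((ℓ (j + 1) - ℓ j : ℤ) : ℝ) * f (r j) := by
  rw [sum_Ico_eq_sum_sum_Ico_of_monotoneOn ℓ _ hab hℓ]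
  refine sum_congr rfl fun j hj => sum_Ico_comp_of_const d f ?_ (hd j hj)
  have hj' := mem_Ico.1 hj
  exact hℓ ⟨hj'.1, by omega⟩ ⟨by omega, by omega⟩ (by omega)

theorem sum_Ico_pair_eq_of_piecewise_const (g : ℝ → ℝ → ℝ) (hab : a < b)
    (hℓ : StrictMonoOn ℓ (Set.Icc a b))
    (hd : ∀ j ∈ Ico a b, ∀ i ∈ Ico (ℓ j) (ℓ (j + 1)), d i = r j) :
    ∑ i ∈ Ico (ℓ a) (ℓ b - 1), g (d i) (d (i + 1)) =
      ∑ j ∈ Ico a b, (((ℓ (j + 1) - ℓ j : ℤ) : ℝ) - 1) * g (r j) (r j) +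
        ∑ j ∈ Ico (a + 1) b, g (r (j - 1)) (r j) := by
  have hstep : ∀ j ∈ Ico a b, ℓ j < ℓ (j + 1) := fun j hj => by
    have hj' := mem_Ico.1 hj
    exact hℓ ⟨hj'.1, by omega⟩ ⟨by omega, by omega⟩ (by omega)
  have interior : ∀ j ∈ Ico a b, ∑ i ∈ Ico (ℓ j) (ℓ (j + 1) - 1), g (d i) (d (i + 1)) =
      (((ℓ (j + 1) - ℓ j : ℤ) : ℝ) - 1) * g (r j) (r j) := fun j hj =>
    sum_Ico_pair_of_const d g (hstep j hj) (hd j hj)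
  have interface : ∀ j ∈ Ico (a + 1) b,
      ∑ i ∈ Ico (ℓ j - 1) (ℓ (j + 1) - 1), g (d i) (d (i + 1)) =
        (((ℓ (j + 1) - ℓ j : ℤ) : ℝ) - 1) * g (r j) (r j) + g (r (j - 1)) (r j) :=
    fun j hj => by
      have hj' := mem_Ico.1 hj
      have hjmem : j ∈ Ico a b := mem_Ico.2 ⟨by omega, hj'.2⟩
      have hprev : j - 1 ∈ Ico a b := mem_Ico.2 ⟨by omega, by omega⟩
      have hlt := hstep j hjmem
      have hlt' := hstep (j - 1) hprev
      rw [sub_add_cancel] at hlt'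
      rw [← insert_Ico_left_eq_Ico_sub_one (show ℓ j ≤ ℓ (j + 1) - 1 by omega),
        sum_insert (by simp), interior j hjmem, sub_add_cancel,
        hd (j - 1) hprev _ (by rw [sub_add_cancel]; exact mem_Ico.2 ⟨by omega, by omega⟩),
        hd j hjmem _ (mem_Ico.2 ⟨le_rfl, hlt⟩), add_comm]
  have hfirst := hstep a (mem_Ico.2 ⟨le_rfl, hab⟩)
  have hrest : ℓ (a + 1) ≤ ℓ b :=
    hℓ.monotoneOn ⟨by omega, by omega⟩ ⟨by omega, le_rfl⟩ (by omega)
  have hshifted : MonotoneOn (fun j => ℓ j - 1) (Set.Icc (a + 1) b) := fun i hi j hj hij => by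
    simpa using hℓ.monotoneOn ⟨by linarith [hi.1], hi.2⟩ ⟨by linarith [hj.1], hj.2⟩ hij
  -- The shifted partition `ℓ j - 1` makes each block begin with the bond straddling `ℓ j`.
  rw [← Ico_union_Ico_eq_Ico (show ℓ a ≤ ℓ (a + 1) - 1 by omega) (by omega),
    sum_union (Ico_disjoint_Ico_consecutive _ _ _),
    sum_Ico_eq_sum_sum_Ico_of_monotoneOn (fun j => ℓ j - 1) _ (by omega) hshifted,
    sum_congr rfl interface, sum_add_distrib, ← insert_Ico_add_one_left_eq_Ico hab,
    sum_insert (by simp), interior a (mem_Ico.2 ⟨le_rfl, hab⟩), add_assoc]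

end PiecewiseConstant

theorem sub_eq_of_eq_add_mul {y : ℤ → ℝ} {p q : ℤ} {y₀ s : ℝ}
    (hy : ∀ i : ℤ, 0 ≤ i → i ≤ q - p → y (p + i) = y₀ + i * s) {i : ℤ} (hi : i ∈ Ico p q) :
    y (i + 1) - y i = s := by
  have hi' := mem_Ico.1 hi
  have h₀ := hy (i - p) (by omega) (by omega)
  have h₁ := hy (i + 1 - p) (by omega) (by omega)
  rw [add_sub_cancel] at h₀ h₁
  rw [h₀, h₁]
  push_cast
  ring

theorem sum_bulk_add_surface_add_interface (φ : ℝ → ℝ) {a₀ : ℝ} (ha₀ : a₀ ≠ 0)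
    (ν r D : ℤ → ℝ) (hD : ∀ j, D j * a₀ = r j) {a b : ℤ} (hab : a ≤ b) :
    ∑ j ∈ Icc a b, ν j * a₀ * Wdens φ a₀ (D j) + Sb φ a₀ (D a) +
        ∑ j ∈ Icc (a + 1) b, Sint φ a₀ (D (j - 1)) (D j) + Sb φ a₀ (D b) =
      ∑ j ∈ Icc a b, ν j * φ (r j) +
        (∑ j ∈ Icc a b, (ν j - 1) * φ (2 * r j) + ∑ j ∈ Icc (a + 1) b, φ (r (j - 1) + r j)) := by
  have hD₂ : ∀ j, 2 * D j * a₀ = 2 * r j := fun j => by rw [mul_assoc, hD]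
  have hbulk : ∀ j, ν j * a₀ * Wdens φ a₀ (D j) = ν j * φ (r j) + ν j * φ (2 * r j) :=
    fun j => by
      rw [Wdens, hD, hD₂]
      field_simp
  simp only [hbulk, Sb, Sint, hD, hD₂, sum_add_distrib, sum_sub_distrib, sub_one_mul, ← sum_div,
    sum_neg_distrib]
  rw [sum_Icc_eq_half_add_sum_avg_add_half (fun j => φ (2 * r j)) hab, ← sum_div,
    sum_add_distrib]
  ring

theorem stmt_5_general (φ : ℝ → ℝ) (a₀ : ℝ) (ha₀ : 0 < a₀)
    (M N : ℤ) (hN : 1 ≤ N) (ℓ : ℤ → ℤ)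
    (hℓmono : ∀ j ∈ Icc (-N) N, ℓ j < ℓ (j + 1))
    (hℓl : ℓ (-N) = -M) (hℓr : ℓ (N + 1) = M + 1)
    (z : ℤ → ℝ) (y : ℤ → ℝ)
    (hy : ∀ j ∈ Icc (-N) N, ∀ i : ℤ, 0 ≤ i → i ≤ ℓ (j + 1) - ℓ j →
      y (ℓ j + i) = z j + (i : ℝ) * ((z (j + 1) - z j) / ((ℓ (j + 1) - ℓ j : ℤ) : ℝ))) :
    (∑ i ∈ Icc (-M) M, φ (y (i + 1) - y i)) +
      (∑ i ∈ Icc (-M) (M - 1), φ (y (i + 2) - y i)) =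
    (∑ j ∈ Icc (-N) N,
        ((ℓ (j + 1) - ℓ j : ℤ) : ℝ) * a₀ * Wdens φ a₀ (Dgrad a₀ ℓ z j)) +
      Sb φ a₀ (Dgrad a₀ ℓ z (-N)) +
      (∑ j ∈ Icc (-N + 1) N, Sint φ a₀ (Dgrad a₀ ℓ z (j - 1)) (Dgrad a₀ ℓ z j)) +
      Sb φ a₀ (Dgrad a₀ ℓ z N) := by
  set r : ℤ → ℝ := fun j => (z (j + 1) - z j) / ((ℓ (j + 1) - ℓ j : ℤ) : ℝ)
  have hD : ∀ j, Dgrad a₀ ℓ z j * a₀ = r j := fun j => by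
    rw [Dgrad, div_mul_eq_div_div, div_mul_cancel₀ _ ha₀.ne']
  have hℓ : StrictMonoOn ℓ (Set.Icc (-N) (N + 1)) :=
    strictMonoOn_of_lt_add_one Set.ordConnected_Icc fun j _ hj hj₁ =>
      hℓmono j (mem_Icc.2 ⟨hj.1, by linarith [hj₁.2]⟩)
  have hd : ∀ j ∈ Ico (-N) (N + 1), ∀ i ∈ Ico (ℓ j) (ℓ (j + 1)), y (i + 1) - y i = r j :=
    fun j hj _ hi => sub_eq_of_eq_add_mul (hy j (by rwa [← Ico_add_one_right_eq_Icc])) hi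
  have hbonds : Icc (-M) M = Ico (ℓ (-N)) (ℓ (N + 1)) := by
    rw [hℓl, hℓr, Ico_add_one_right_eq_Icc]
  have hbonds₂ : Icc (-M) (M - 1) = Ico (ℓ (-N)) (ℓ (N + 1) - 1) := by
    rw [hℓl, hℓr, add_sub_cancel_right, Icc_sub_one_right_eq_Ico]
  have hsecond : ∀ i, y (i + 2) - y i = (y (i + 1) - y i) + (y (i + 1 + 1) - y (i + 1)) :=
    fun i => by ring_nf
  rw [hbonds, hbonds₂, sum_congr rfl fun i _ => congrArg φ (hsecond i),
    sum_Ico_comp_eq_sum_mul_of_piecewise_const _ ℓ r φ (by omega) hℓ.monotoneOn hd,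
    sum_Ico_pair_eq_of_piecewise_const (fun i => y (i + 1) - y i) ℓ r (fun s t => φ (s + t))
      (by omega) hℓ hd,
    Ico_add_one_right_eq_Icc, Ico_add_one_right_eq_Icc,
    sum_bulk_add_surface_add_interface φ ha₀.ne' _ r _ hD (by omega)]
  simp only [← two_mul]

/-- The constrained quasicontinuum energy `E^CQC(z) = E^a(y(z))` decomposes into bulk,
surface, and interfacial parts:
`E^CQC(z) = Σ_j L_j W(D_j) + S_b(D_{−N}) + Σ_j S(D_{j−1}, D_j) + S_b(D_N)`,
where `L_j = ν_j a₀` and `y(z)` is the piecewise linear interpolant of the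
representative positions `z`. -/
theorem stmt_5 (φ : ℝ → ℝ) (a₀ : ℝ) (ha₀ : 0 < a₀)
    (M N : ℤ) (hN : 1 ≤ N) (ℓ : ℤ → ℤ)
    (hℓmono : ∀ j ∈ Icc (-N) N, ℓ j < ℓ (j + 1))
    (hℓl : ℓ (-N) = -M) (hℓr : ℓ (N + 1) = M + 1)
    (z : ℤ → ℝ) (hz : ∀ j ∈ Icc (-N) N, z j < z (j + 1))
    (y : ℤ → ℝ)
    (hy : ∀ j ∈ Icc (-N) N, ∀ i : ℤ, 0 ≤ i → i ≤ ℓ (j + 1) - ℓ j →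
      y (ℓ j + i) = z j + (i : ℝ) * ((z (j + 1) - z j) / ((ℓ (j + 1) - ℓ j : ℤ) : ℝ))) :
    (∑ i ∈ Icc (-M) M, φ (y (i + 1) - y i)) +
      (∑ i ∈ Icc (-M) (M - 1), φ (y (i + 2) - y i)) =
    (∑ j ∈ Icc (-N) N,
        ((ℓ (j + 1) - ℓ j : ℤ) : ℝ) * a₀ * Wdens φ a₀ (Dgrad a₀ ℓ z j)) +
      Sb φ a₀ (Dgrad a₀ ℓ z (-N)) +
      (∑ j ∈ Icc (-N + 1) N, Sint φ a₀ (Dgrad a₀ ℓ z (j - 1)) (Dgrad a₀ ℓ z j)) +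
      Sb φ a₀ (Dgrad a₀ ℓ z N) :=
  stmt_5_general φ a₀ ha₀ M N hN ℓ hℓmono hℓl hℓr z y hy
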